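/- arXiv:1501.02088 — 2 statements merged into one kernel-verified Lean document; each statement's English description precedes it below -/
import Mathlib

section
/- Let φ ∈ L², and for σ-almost every I ∈ S let a_n(I) = (1/2π) ∫₀^{2π} exp(−ntI) φ(exp(tI)) dt denote the Fourier coefficients of the restriction of φ to the circle ∂B ∩ (ℝ + ℝI), so that φ(exp(tI)) = Σ_{n∈ℤ} exp(ntI) a_n(I) in L² of that circle. Then the orthogonal projection of φ onto L²_s is given by Πφ(exp(tJ)) = Σ_{n∈ℤ} exp(ntJ) ã_n, where ã_n = ∫_S a_n(I) dσ(I) for every n ∈ ℤ. -/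
open MeasureTheory Real Set
open scoped ENNReal

noncomputable section

instance : MeasurableSpace (Quaternion ℝ) := borel _
instance : BorelSpace (Quaternion ℝ) := ⟨rfl⟩

/-- The 2-sphere of imaginary units `S = {q ∈ ℍ : q² = -1}`. -/
def Sph : Set (Quaternion ℝ) := {q | q ^ 2 = -1}

/-- `qexp t I = exp (t I) = cos t + (sin t) I`. -/
def qexp (t : ℝ) (I : Quaternion ℝ) : Quaternion ℝ :=
  Real.cos t • (1 : Quaternion ℝ) + Real.sin t • I

/-- A function on the unit sphere of `ℍ` is a *slice function* if it satisfies the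
representation formula
`f(exp(tJ)) = ½[f(exp(tI)) + f(exp(-tI))] + (JI/2)[f(exp(-tI)) − f(exp(tI))]`
for all imaginary units `I, J` and all real `t`. -/
def IsSlice (f : Quaternion ℝ → Quaternion ℝ) : Prop :=
  ∀ I ∈ Sph, ∀ J ∈ Sph, ∀ t : ℝ,
    f (qexp t J) =
      (f (qexp t I) + f (qexp (-t) I)) / 2 +
        (J * I / 2) * (f (qexp (-t) I) - f (qexp t I))

/-- `σ` is the rotation-invariant probability measure on the sphere `S` of imaginary
units (rotations of `S` are realized as conjugations by unit quaternions). -/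
structure IsSphereMeasure (σ : Measure (Quaternion ℝ)) : Prop where
  prob : IsProbabilityMeasure σ
  supp : σ Sphᶜ = 0
  rotInv : ∀ u : Quaternion ℝ, ‖u‖ = 1 → Measure.map (fun q => u * q * u⁻¹) σ = σ

/-- Normalized Lebesgue measure `dt/2π` on `[0, 2π)`. -/
def arcMeasure : Measure ℝ :=
  (ENNReal.ofReal (2 * π))⁻¹ • volume.restrict (Ico 0 (2 * π))

/-- The measure `Σ` on the unit sphere `∂B` of `ℍ`: the pushforward of `σ ⊗ dt/2π`
under `(I, t) ↦ exp (t I)`. -/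
def bMeasure (σ : Measure (Quaternion ℝ)) : Measure (Quaternion ℝ) :=
  Measure.map (fun p : Quaternion ℝ × ℝ => qexp p.2 p.1) (σ.prod arcMeasure)

/-- The `n`-th Fourier coefficient of `f` on the slice circle through the
imaginary unit `I`: `(1/2π) ∫₀^{2π} exp(−ntI) f(exp(tI)) dt`. -/
def fcoeff (f : Quaternion ℝ → Quaternion ℝ) (n : ℤ) (I : Quaternion ℝ) : Quaternion ℝ :=
  (2 * π)⁻¹ • ∫ t in Ico (0 : ℝ) (2 * π), qexp (-(n * t)) I * f (qexp t I)

/-- `Pφ` is (a representative of) the orthogonal projection of `φ ∈ L²(∂B, Σ; ℍ)` onto the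
closed subspace `L²_s` of slice functions, for the real inner product
`⟨f, g⟩ = ∫ Re (conj g * f) dΣ`: `Pφ` is a slice function in `L²` and `φ - Pφ` is orthogonal
to every slice function in `L²`. -/
def IsProjection (σ : Measure (Quaternion ℝ)) (φ Pφ : Quaternion ℝ → Quaternion ℝ) : Prop :=
  MemLp φ 2 (bMeasure σ) ∧ IsSlice Pφ ∧ MemLp Pφ 2 (bMeasure σ) ∧
    ∀ g : Quaternion ℝ → Quaternion ℝ, IsSlice g → MemLp g 2 (bMeasure σ) →
      ∫ q, (star (g q) * (φ q - Pφ q)).re ∂(bMeasure σ) = 0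

/-!
Testing the orthogonality of `φ - Πφ` against the slice functions `q ↦ qⁿ e` (`e ∈ ℍ`) and
disintegrating `Σ` as `σ ⊗ dt/2π` shows that the mean over `S` of the `n`-th slice coefficients
is the same for `φ` and for `Πφ`. For a slice function, the representation formula writes the
restriction to the slice through `K` as `A(t) + K B(t)` with `A, B` independent of `K`, so its
`n`-th coefficient is `α + K β`; since reversing the orientation of a slice (`K ↦ -K`) does not
change the coefficients, `β = 0`. Hence the coefficients of `Πφ` are constant on `S` and equal
their mean.
-/

open scoped InnerProductSpace

namespace Sph

variable {I : Quaternion ℝ}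

theorem mul_self (hI : I ∈ Sph) : I * I = -1 := by
  rw [← sq]; exact hI

theorem norm_eq_one (hI : I ∈ Sph) : ‖I‖ = 1 := by
  have h : ‖I‖ ^ 2 = 1 := by rw [← norm_pow, show I ^ 2 = -1 from hI, norm_neg, norm_one]
  exact (pow_eq_one_iff_of_nonneg (norm_nonneg I) two_ne_zero).mp h

theorem re_eq_zero (hI : I ∈ Sph) : I.re = 0 := by
  rw [← Quaternion.sq_eq_neg_normSq, Quaternion.normSq_eq_norm_mul_self, norm_eq_one hI,
    mul_one, Quaternion.coe_one]
  exact hI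

theorem star_eq_neg (hI : I ∈ Sph) : star I = -I :=
  Quaternion.star_eq_neg.mpr (re_eq_zero hI)

theorem neg_mem (hI : I ∈ Sph) : -I ∈ Sph := by
  show (-I) ^ 2 = -1
  rw [neg_sq]; exact hI

theorem ne_zero (hI : I ∈ Sph) : I ≠ 0 := by
  rintro rfl; simpa using norm_eq_one hI

end Sph

section qexp

variable {I : Quaternion ℝ}

@[simp]
theorem qexp_zero (I : Quaternion ℝ) : qexp 0 I = 1 := by simp [qexp]

theorem qexp_neg_right (t : ℝ) (I : Quaternion ℝ) : qexp t (-I) = qexp (-t) I := by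
  simp [qexp]

theorem qexp_add_int_mul_two_pi (t : ℝ) (k : ℤ) (I : Quaternion ℝ) :
    qexp (t + k * (2 * π)) I = qexp t I := by
  simp [qexp, cos_add_int_mul_two_pi, sin_add_int_mul_two_pi]

theorem qexp_periodic (I : Quaternion ℝ) : Function.Periodic (qexp · I) (2 * π) := by
  intro t; simpa using qexp_add_int_mul_two_pi t 1 I

@[fun_prop]
theorem Continuous.qexp {α : Type*} [TopologicalSpace α] {t : α → ℝ} {I : α → Quaternion ℝ}
    (ht : Continuous t) (hI : Continuous I) : Continuous fun a => qexp (t a) (I a) := by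
  unfold _root_.qexp; fun_prop

theorem qexp_add (hI : I ∈ Sph) (s t : ℝ) : qexp (s + t) I = qexp s I * qexp t I := by
  simp only [qexp, add_mul, mul_add, smul_mul_smul_comm, one_mul, mul_one, Sph.mul_self hI,
    cos_add, sin_add]
  module

theorem star_qexp (hI : I ∈ Sph) (t : ℝ) : star (qexp t I) = qexp (-t) I := by
  simp [qexp, Sph.star_eq_neg hI]

theorem norm_qexp (hI : I ∈ Sph) (t : ℝ) : ‖qexp t I‖ = 1 := by
  have h : Quaternion.normSq (qexp t I) = 1 := by
    have := Quaternion.self_mul_star (qexp t I)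
    rw [star_qexp hI, ← qexp_add hI, add_neg_cancel, qexp_zero] at this
    exact Quaternion.coe_injective this.symm
  rw [Quaternion.normSq_eq_norm_mul_self] at h
  nlinarith [norm_nonneg (qexp t I)]

theorem qexp_pow (hI : I ∈ Sph) (t : ℝ) (m : ℕ) : qexp t I ^ m = qexp (m * t) I := by
  induction m with
  | zero => simp
  | succ k ih => rw [pow_succ, ih, ← qexp_add hI]; push_cast; ring_nf

theorem qexp_zpow (hI : I ∈ Sph) (t : ℝ) (n : ℤ) : qexp t I ^ n = qexp (n * t) I := by
  obtain ⟨m, rfl | rfl⟩ := n.eq_nat_or_neg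
  · simpa using qexp_pow hI t m
  · have hinv : (qexp t I)⁻¹ = qexp (-t) I :=
      inv_eq_of_mul_eq_one_right (by rw [← qexp_add hI, add_neg_cancel, qexp_zero])
    rw [zpow_neg, zpow_natCast, ← inv_pow, hinv, qexp_pow hI]; push_cast; ring_nf

end qexp

section IsSlice

theorem Quaternion.div_two_eq_smul (q : Quaternion ℝ) : q / 2 = (2 : ℝ)⁻¹ • q := by
  rw [div_eq_mul_inv, show (2 : Quaternion ℝ) = ((2 : ℝ) : Quaternion ℝ) from rfl,
    ← Quaternion.coe_inv, Quaternion.mul_coe_eq_smul]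

theorem qexp_eq_slice_formula {I : Quaternion ℝ} (hI : I ∈ Sph) (J : Quaternion ℝ) (t : ℝ) :
    qexp t J = (qexp t I + qexp (-t) I) / 2 + (J * I / 2) * (qexp (-t) I - qexp t I) := by
  simp only [qexp, cos_neg, sin_neg, Quaternion.div_two_eq_smul, smul_mul_assoc, mul_sub,
    mul_add, mul_smul_comm, mul_one, mul_neg, mul_assoc, Sph.mul_self hI]
  module

theorem isSlice_zpow (n : ℤ) : IsSlice (· ^ n) := by
  intro I hI J hJ t
  simp only [qexp_zpow hI, qexp_zpow hJ, mul_neg]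
  exact qexp_eq_slice_formula hI J _

theorem IsSlice.mul_const {f : Quaternion ℝ → Quaternion ℝ} (hf : IsSlice f)
    (e : Quaternion ℝ) : IsSlice (f · * e) := by
  intro I hI J hJ t
  simp only [hf I hI J hJ t, Quaternion.div_two_eq_smul, add_mul, sub_mul, smul_mul_assoc,
    mul_assoc]

end IsSlice

theorem Function.Periodic.intervalIntegrable_comp_neg {E : Type*} [NormedAddCommGroup E]
    {g : ℝ → E} {T : ℝ} (hg : Function.Periodic g T) (hT : T ≠ 0)
    (hint : IntervalIntegrable g volume 0 T) :
    IntervalIntegrable (fun t => g (-t)) volume 0 T := by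
  simpa using
    (IntervalIntegrable.iff_comp_neg).mp (hg.intervalIntegrable hT (by rwa [zero_add]) 0 (-T))

section fcoeff

variable {f : Quaternion ℝ → Quaternion ℝ} {I J K : Quaternion ℝ}

theorem fcoeff_eq_intervalIntegral (f : Quaternion ℝ → Quaternion ℝ) (n : ℤ)
    (I : Quaternion ℝ) :
    fcoeff f n I = (2 * π)⁻¹ • ∫ t in 0..2 * π, qexp (-(n * t)) I * f (qexp t I) := by
  rw [fcoeff, setIntegral_congr_set Ico_ae_eq_Ioc, intervalIntegral.integral_of_le two_pi_pos.le]

theorem periodic_qexp_mul_comp_qexp (f : Quaternion ℝ → Quaternion ℝ) (n : ℤ)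
    (I : Quaternion ℝ) :
    Function.Periodic (fun t => qexp (-(n * t)) I * f (qexp t I)) (2 * π) := by
  intro t
  simp only [(qexp_periodic I) t]
  rw [show -(n * (t + 2 * π)) = -(n * t) + (-n : ℤ) * (2 * π) by push_cast; ring,
    qexp_add_int_mul_two_pi]

theorem fcoeff_neg_right (f : Quaternion ℝ → Quaternion ℝ) (n : ℤ) (I : Quaternion ℝ) :
    fcoeff f n (-I) = fcoeff f n I := by
  set g := fun t => qexp (-(n * t)) I * f (qexp t I)
  rw [fcoeff_eq_intervalIntegral, fcoeff_eq_intervalIntegral]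
  congr 1
  calc ∫ t in 0..2 * π, qexp (-(n * t)) (-I) * f (qexp t (-I))
      = ∫ t in 0..2 * π, g (-t) := by simp only [g, qexp_neg_right, mul_neg, neg_neg]
    _ = ∫ t in -(2 * π)..-(2 * π) + 2 * π, g t := by
        rw [intervalIntegral.integral_comp_neg g, neg_zero, neg_add_cancel]
    _ = ∫ t in 0..2 * π, g t := by
        rw [(periodic_qexp_mul_comp_qexp f n I).intervalIntegral_add_eq, zero_add]

theorem qexp_neg_mul_add_mul (hK : K ∈ Sph) (s : ℝ) (A B : Quaternion ℝ) :
    qexp (-s) K * (A + K * B) = (cos s • A + sin s • B) + K * (cos s • B - sin s • A) := by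
  simp only [qexp, cos_neg, sin_neg, add_mul, mul_add, mul_sub, smul_mul_assoc, one_mul,
    mul_smul_comm, ← mul_assoc, Sph.mul_self hK, neg_one_mul]
  module

theorem IsSlice.exists_fcoeff_eq_add_mul (hf : IsSlice f) (hI : I ∈ Sph)
    (hint : IntervalIntegrable (fun t => f (qexp t I)) volume 0 (2 * π)) (n : ℤ) :
    ∃ α β : Quaternion ℝ, ∀ K ∈ Sph, fcoeff f n K = α + K * β := by
  set A : ℝ → Quaternion ℝ := fun t => (f (qexp t I) + f (qexp (-t) I)) / 2
  set B : ℝ → Quaternion ℝ := fun t => I / 2 * (f (qexp (-t) I) - f (qexp t I))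
  have hint_neg : IntervalIntegrable (fun t => f (qexp (-t) I)) volume 0 (2 * π) :=
    ((qexp_periodic I).comp f).intervalIntegrable_comp_neg two_pi_pos.ne' hint
  have hA : IntervalIntegrable A volume 0 (2 * π) := (hint.add hint_neg).div_const 2
  have hB : IntervalIntegrable B volume 0 (2 * π) := (hint_neg.sub hint).const_mul _
  have hcos : ContinuousOn (fun t : ℝ => cos (n * t)) (uIcc 0 (2 * π)) := by fun_prop
  have hsin : ContinuousOn (fun t : ℝ => sin (n * t)) (uIcc 0 (2 * π)) := by fun_prop
  have hX := (hA.continuousOn_smul hcos).add (hB.continuousOn_smul hsin)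
  have hY := (hB.continuousOn_smul hcos).sub (hA.continuousOn_smul hsin)
  refine ⟨(2 * π)⁻¹ • ∫ t in 0..2 * π, cos (n * t) • A t + sin (n * t) • B t,
    (2 * π)⁻¹ • ∫ t in 0..2 * π, cos (n * t) • B t - sin (n * t) • A t, fun K hK => ?_⟩
  have hdecomp : ∀ t, qexp (-(n * t)) K * f (qexp t K) =
      (cos (n * t) • A t + sin (n * t) • B t) + K * (cos (n * t) • B t - sin (n * t) • A t) := by
    intro t
    rw [hf I hI K hK t, mul_div_assoc, mul_assoc]
    exact qexp_neg_mul_add_mul hK _ _ _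
  rw [fcoeff_eq_intervalIntegral, intervalIntegral.integral_congr fun t _ => hdecomp t,
    intervalIntegral.integral_add hX (hY.const_mul K), intervalIntegral.integral_const_mul,
    smul_add, mul_smul_comm]

theorem IsSlice.fcoeff_eq (hf : IsSlice f) (hI : I ∈ Sph)
    (hint : IntervalIntegrable (fun t => f (qexp t I)) volume 0 (2 * π)) (n : ℤ)
    (hJ : J ∈ Sph) : fcoeff f n J = fcoeff f n I := by
  obtain ⟨α, β, hαβ⟩ := hf.exists_fcoeff_eq_add_mul hI hint n
  have hβ : β = 0 := by
    have h := hαβ (-J) (Sph.neg_mem hJ)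
    rw [fcoeff_neg_right, hαβ J hJ, add_right_inj, neg_mul] at h
    have h2 : (2 : ℝ) • (J * β) = 0 := by
      rw [two_smul]; nth_rw 1 [h]; exact neg_add_cancel (J * β)
    exact (mul_eq_zero.mp ((smul_eq_zero.mp h2).resolve_left two_ne_zero)).resolve_left
      (Sph.ne_zero hJ)
  rw [hαβ J hJ, hαβ I hI, hβ, mul_zero, mul_zero]

end fcoeff

section arcMeasure

instance : IsProbabilityMeasure arcMeasure := by
  constructor
  rw [arcMeasure, Measure.smul_apply, Measure.restrict_apply_univ, volume_Ico, sub_zero,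
    smul_eq_mul, ENNReal.inv_mul_cancel (by simp [pi_pos]) ENNReal.ofReal_ne_top]

theorem integral_arcMeasure {E : Type*} [NormedAddCommGroup E] [NormedSpace ℝ E] (g : ℝ → E) :
    ∫ t, g t ∂arcMeasure = (2 * π)⁻¹ • ∫ t in Ico 0 (2 * π), g t := by
  rw [arcMeasure, integral_smul_measure, ENNReal.toReal_inv, ENNReal.toReal_ofReal two_pi_pos.le]

theorem intervalIntegrable_of_integrable_arcMeasure {E : Type*} [NormedAddCommGroup E]
    {g : ℝ → E} (hg : Integrable g arcMeasure) : IntervalIntegrable g volume 0 (2 * π) := by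
  rw [intervalIntegrable_iff_integrableOn_Ico_of_le two_pi_pos.le]
  rw [arcMeasure] at hg
  exact (integrable_smul_measure (ENNReal.inv_ne_zero.mpr ENNReal.ofReal_ne_top)
    (by simp [pi_pos])).mp hg

theorem fcoeff_eq_integral_arcMeasure (f : Quaternion ℝ → Quaternion ℝ) (n : ℤ)
    (I : Quaternion ℝ) :
    fcoeff f n I = ∫ t, qexp (-(n * t)) I * f (qexp t I) ∂arcMeasure :=
  (integral_arcMeasure _).symm

end arcMeasure

section bMeasure

variable {σ : Measure (Quaternion ℝ)} {f : Quaternion ℝ → Quaternion ℝ}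

instance [IsFiniteMeasure σ] : IsFiniteMeasure (bMeasure σ) := by
  unfold bMeasure; infer_instance

theorem measurable_qexp_prod : Measurable fun p : Quaternion ℝ × ℝ => qexp p.2 p.1 := by
  apply Continuous.measurable; fun_prop

theorem ae_prod_mem_Sph [SFinite σ] (hσ : ∀ᵐ I ∂σ, I ∈ Sph) :
    ∀ᵐ p ∂σ.prod arcMeasure, p.1 ∈ Sph :=
  Measure.quasiMeasurePreserving_fst.ae hσ

theorem ae_bMeasure_norm_eq_one [SFinite σ] (hσ : ∀ᵐ I ∂σ, I ∈ Sph) :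
    ∀ᵐ q ∂bMeasure σ, ‖q‖ = 1 := by
  rw [bMeasure, ae_map_iff measurable_qexp_prod.aemeasurable
    (measurableSet_eq_fun continuous_norm.measurable measurable_const)]
  filter_upwards [ae_prod_mem_Sph hσ] with p hp using norm_qexp hp _

theorem integrable_comp_qexp_prod (hf : Integrable f (bMeasure σ)) :
    Integrable (fun p : Quaternion ℝ × ℝ => f (qexp p.2 p.1)) (σ.prod arcMeasure) :=
  (integrable_map_measure hf.1 measurable_qexp_prod.aemeasurable).mp hf

theorem ae_intervalIntegrable_comp_qexp [SFinite σ] (hf : Integrable f (bMeasure σ)) :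
    ∀ᵐ I ∂σ, IntervalIntegrable (fun t => f (qexp t I)) volume 0 (2 * π) :=
  (integrable_comp_qexp_prod hf).prod_right_ae.mono fun _ =>
    intervalIntegrable_of_integrable_arcMeasure

theorem integrable_star_zpow_mul [SFinite σ] (hσ : ∀ᵐ I ∂σ, I ∈ Sph)
    (hf : Integrable f (bMeasure σ)) (n : ℤ) :
    Integrable (fun q => star (q ^ n) * f q) (bMeasure σ) := by
  refine hf.bdd_mul (c := 1) (by fun_prop) ?_
  filter_upwards [ae_bMeasure_norm_eq_one hσ] with q hq
  rw [norm_star, norm_zpow, hq, one_zpow]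

theorem integral_bMeasure_star_zpow_mul [SFinite σ] (hσ : ∀ᵐ I ∂σ, I ∈ Sph)
    (hf : Integrable f (bMeasure σ)) (n : ℤ) :
    ∫ q, star (q ^ n) * f q ∂bMeasure σ = ∫ I, fcoeff f n I ∂σ := by
  have hint := integrable_comp_qexp_prod (integrable_star_zpow_mul hσ hf n)
  have hcoeff : (fun p : Quaternion ℝ × ℝ => star (qexp p.2 p.1 ^ n) * f (qexp p.2 p.1))
      =ᵐ[σ.prod arcMeasure] fun p => qexp (-(n * p.2)) p.1 * f (qexp p.2 p.1) := by
    filter_upwards [ae_prod_mem_Sph hσ] with p hp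
    rw [qexp_zpow hp, star_qexp hp]
  rw [bMeasure, integral_map measurable_qexp_prod.aemeasurable
      (integrable_star_zpow_mul hσ hf n).1, integral_congr_ae hcoeff,
    integral_prod _ (hint.congr hcoeff)]
  simp only [fcoeff_eq_integral_arcMeasure]

theorem memLp_zpow_mul_const [IsFiniteMeasure σ] (hσ : ∀ᵐ I ∂σ, I ∈ Sph) (n : ℤ)
    (e : Quaternion ℝ) : MemLp (fun q => q ^ n * e) 2 (bMeasure σ) := by
  refine MemLp.of_bound (by fun_prop) ‖e‖ ?_
  filter_upwards [ae_bMeasure_norm_eq_one hσ] with q hq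
  rw [norm_mul, norm_zpow, hq, one_zpow, one_mul]

theorem Quaternion.re_star_mul (a b : Quaternion ℝ) : (star a * b).re = ⟪a, b⟫_ℝ := by
  simp only [Quaternion.inner_def, Quaternion.re_mul, Quaternion.re_star, Quaternion.imI_star,
    Quaternion.imJ_star, Quaternion.imK_star]
  ring

theorem IsProjection.integral_star_zpow_mul_sub_eq_zero {φ Pφ : Quaternion ℝ → Quaternion ℝ}
    [IsFiniteMeasure σ] (hP : IsProjection σ φ Pφ) (hσ : ∀ᵐ I ∂σ, I ∈ Sph) (n : ℤ) :
    ∫ q, star (q ^ n) * (φ q - Pφ q) ∂bMeasure σ = 0 := by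
  obtain ⟨hφ, -, hPφ, horth⟩ := hP
  set v := ∫ q, star (q ^ n) * (φ q - Pφ q) ∂bMeasure σ
  have hint : Integrable (fun q => star (q ^ n) * (φ q - Pφ q)) (bMeasure σ) :=
    integrable_star_zpow_mul hσ ((hφ.sub hPφ).integrable one_le_two) n
  refine (inner_self_eq_zero (𝕜 := ℝ)).mp ?_
  calc ⟪v, v⟫_ℝ = ∫ q, ⟪v, star (q ^ n) * (φ q - Pφ q)⟫_ℝ ∂bMeasure σ :=
        (integral_inner (𝕜 := ℝ) hint v).symm
    _ = ∫ q, (star (q ^ n * v) * (φ q - Pφ q)).re ∂bMeasure σ := by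
        simp only [star_mul, mul_assoc, Quaternion.re_star_mul]
    _ = 0 := horth _ ((isSlice_zpow n).mul_const v) (memLp_zpow_mul_const hσ n v)

end bMeasure

/-- Let `φ ∈ L²(∂B, Σ; ℍ)` and, for `I ∈ S`, let
`a_n(I) = (1/2π) ∫₀^{2π} exp(−ntI) φ(exp(tI)) dt` be the Fourier coefficients of the
restriction of `φ` to the circle `∂B ∩ (ℝ + ℝI)`. Then the orthogonal projection `Πφ`
of `φ` onto the space `L²_s` of slice functions is
`Πφ(exp(tJ)) = Σ_{n∈ℤ} exp(ntJ) ã_n`, where `ã_n = ∫_S a_n(I) dσ(I)`; equivalently, the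
Fourier coefficients of the slice function `Πφ` (which are independent of the slice) are
the means `ã_n = ∫_S a_n(I) dσ(I)`. -/
theorem projection_fcoeff_eq_mean (σ : Measure (Quaternion ℝ)) (hσ : IsSphereMeasure σ)
    (φ Pφ : Quaternion ℝ → Quaternion ℝ) (hP : IsProjection σ φ Pφ) :
    ∀ n : ℤ, ∀ J ∈ Sph, fcoeff Pφ n J = ∫ I, fcoeff φ n I ∂σ := by
  intro n J hJ
  have : IsProbabilityMeasure σ := hσ.prob
  have hσS : ∀ᵐ I ∂σ, I ∈ Sph := ae_iff.mpr hσ.supp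
  have hφ := hP.1.integrable one_le_two
  have hPφ := hP.2.2.1.integrable one_le_two
  obtain ⟨I₀, hI₀, hint⟩ := (hσS.and (ae_intervalIntegrable_comp_qexp hPφ)).exists
  have hconst : ∀ᵐ I ∂σ, fcoeff Pφ n I = fcoeff Pφ n I₀ :=
    hσS.mono fun _ hI => hP.2.1.fcoeff_eq hI₀ hint n hI
  calc fcoeff Pφ n J = ∫ I, fcoeff Pφ n I ∂σ := by
        rw [integral_congr_ae hconst, hP.2.1.fcoeff_eq hI₀ hint n hJ, integral_const,
          probReal_univ, one_smul]
    _ = ∫ q, star (q ^ n) * Pφ q ∂bMeasure σ :=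
        (integral_bMeasure_star_zpow_mul hσS hPφ n).symm
    _ = ∫ q, star (q ^ n) * φ q ∂bMeasure σ := by
        rw [eq_comm, ← sub_eq_zero, ← integral_sub (integrable_star_zpow_mul hσS hφ n)
          (integrable_star_zpow_mul hσS hPφ n)]
        simpa only [mul_sub] using hP.integral_star_zpow_mul_sub_eq_zero hσS n
    _ = ∫ I, fcoeff φ n I ∂σ := integral_bMeasure_star_zpow_mul hσS hφ n
end
end

section
/- If φ : ∂B → ℍ is continuous, then for Σ-almost every exp(tI) ∈ ∂B one has Πφ(exp(tI)) = ∫_S (1 − IJ) φ(exp(tJ)) dσ(J). -/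
open MeasureTheory Real Set
open scoped ENNReal

noncomputable section

/-!
Put `a(t) = ∫ φ(exp(tJ)) dσ(J)`, `b(t) = ∫ J φ(exp(tJ)) dσ(J)` and `G(exp(tI)) = a(t) - I b(t)`,
which is `∫ (1 - IJ) φ(exp(tJ)) dσ(J)`. Every `J ∈ S` is conjugate to `-J` by a unit quaternion,
so averaging the rotation invariance of `σ` over the Haar measure of the unit quaternions shows
that `σ` is invariant under `J ↦ -J`. Hence `a` is even and `b` is odd, which makes `G` a well
defined slice function; it is bounded, so it lies in `L²_s`. On a slice circle every slice
function has the form `J ↦ α + Jβ`, and `φ - G` is `L²(σ)`-orthogonal to all of these because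
`∫ J dσ = 0` and `J² = -1` on `S`. By Fubini `φ - G ⊥ L²_s`, so `Πφ - G` is a slice function
orthogonal to itself.
-/

open scoped InnerProductSpace
open Metric (sphere)

local notation "ℍ" => Quaternion ℝ

instance {R : Type*} [CommRing R] [CharZero R] : CharZero (Quaternion R) :=
  ⟨fun m n h => by simpa using congrArg QuaternionAlgebra.re h⟩

lemma Quaternion.re_mul_comm {R : Type*} [CommRing R] (x y : Quaternion R) :
    (x * y).re = (y * x).re := by
  simp only [Quaternion.re_mul]; ring

lemma Quaternion.inner_mul_right_eq (x y z : ℍ) : ⟪x, y * z⟫_ℝ = ⟪star y * x, z⟫_ℝ := by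
  rw [Quaternion.inner_def, Quaternion.inner_def, star_mul, ← mul_assoc, Quaternion.re_mul_comm,
    mul_assoc]

lemma Quaternion.re_star_mul_eq_inner (a b : ℍ) : (star a * b).re = ⟪b, a⟫_ℝ := by
  rw [Quaternion.inner_def, Quaternion.re_mul_comm]

lemma Function.Even.comp_abs {β : Type*} {f : ℝ → β} (hf : f.Even) (x : ℝ) : f |x| = f x := by
  rcases abs_choice x with h | h <;> simp [h, hf.eq]

lemma Function.Odd.inv_abs_mul_smul_comp_abs {E : Type*} [AddCommGroup E] [IsAddTorsionFree E]
    [Module ℝ E] {f : ℝ → E} (hf : f.Odd) (x : ℝ) : (|x|⁻¹ * x) • f |x| = f x := by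
  rcases lt_trichotomy x 0 with hx | rfl | hx
  · rw [abs_of_neg hx, hf.eq, inv_neg, neg_mul, inv_mul_cancel₀ hx.ne, neg_smul, one_smul, neg_neg]
  · simp [hf.map_zero]
  · rw [abs_of_pos hx, inv_mul_cancel₀ hx.ne', one_smul]

namespace MeasureTheory.MemLp

variable {α E : Type*} {m : MeasurableSpace α} {μ : Measure α} [NormedAddCommGroup E]
  [InnerProductSpace ℝ E]

lemma integrable_inner {f g : α → E} (hf : MemLp f 2 μ) (hg : MemLp g 2 μ) :
    Integrable (fun x => ⟪f x, g x⟫_ℝ) μ :=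
  memLp_one_iff_integrable.1 ((innerSL ℝ).memLp_of_bilin 1 hf hg)

lemma ae_eq_zero_of_integral_inner_self {f : α → E} (hf : MemLp f 2 μ)
    (h : ∫ x, ⟪f x, f x⟫_ℝ ∂μ = 0) : f =ᵐ[μ] 0 := by
  have hi := hf.integrable_inner hf
  simp_rw [real_inner_self_eq_norm_sq] at h hi
  filter_upwards [(integral_eq_zero_iff_of_nonneg (fun x => sq_nonneg ‖f x‖) hi).mp h] with x hx
  simpa using hx

end MeasureTheory.MemLp

lemma mem_Sph_iff {J : ℍ} : J ∈ Sph ↔ J.re = 0 ∧ ‖J‖ = 1 := by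
  rw [← pow_eq_one_iff_of_nonneg (norm_nonneg J) two_ne_zero, sq,
    ← Quaternion.normSq_eq_norm_mul_self]
  constructor
  · intro h
    have h' : J * J = -1 := by rw [← sq]; exact h
    have hre := congrArg QuaternionAlgebra.re h'
    have hi := congrArg QuaternionAlgebra.imI h'
    have hj := congrArg QuaternionAlgebra.imJ h'
    have hk := congrArg QuaternionAlgebra.imK h'
    simp only [Quaternion.re_mul, Quaternion.imI_mul, Quaternion.imJ_mul, Quaternion.imK_mul,
      Quaternion.re_neg, Quaternion.imI_neg, Quaternion.imJ_neg, Quaternion.imK_neg,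
      Quaternion.re_one, Quaternion.imI_one, Quaternion.imJ_one, Quaternion.imK_one]
      at hre hi hj hk
    have h0 : J.re = 0 := by
      nlinarith [sq_nonneg J.re, sq_nonneg (J.re * J.imI), sq_nonneg (J.re * J.imJ),
        sq_nonneg (J.re * J.imK)]
    refine ⟨h0, ?_⟩
    rw [Quaternion.normSq_def']
    nlinarith
  · rintro ⟨h0, h1⟩
    show J ^ 2 = -1
    rw [Quaternion.sq_eq_neg_normSq.mpr h0, h1, Quaternion.coe_one]

lemma mul_self_of_mem_Sph {J : ℍ} (hJ : J ∈ Sph) : J * J = -1 := by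
  rw [← sq]; exact hJ

lemma star_of_mem_Sph {J : ℍ} (hJ : J ∈ Sph) : star J = -J :=
  Quaternion.star_eq_neg.mpr (mem_Sph_iff.mp hJ).1

lemma nonempty_Sph : Sph.Nonempty := by
  set i : ℍ := ⟨0, 1, 0, 0⟩ with hi
  refine ⟨i, mem_Sph_iff.mpr ⟨rfl, ?_⟩⟩
  rw [← Real.sqrt_eq_one, ← Real.sqrt_sq (norm_nonneg i), sq,
    ← Quaternion.normSq_eq_norm_mul_self, Quaternion.normSq_def']
  simp [hi]

lemma isCompact_Sph : IsCompact Sph :=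
  Metric.isCompact_of_isClosed_isBounded (isClosed_eq (continuous_pow 2) continuous_const)
    (isBounded_iff_forall_norm_le.mpr ⟨1, fun _ hJ => (mem_Sph_iff.mp hJ).2.le⟩)

lemma smul_one_add_smul_mem_sphere {c r : ℝ} (hcr : c ^ 2 + r ^ 2 = 1) {J : ℍ} (hJ : J ∈ Sph) :
    c • (1 : ℍ) + r • J ∈ sphere (0 : ℍ) 1 := by
  obtain ⟨hre, hnorm⟩ := mem_Sph_iff.mp hJ
  have hJ2 : Quaternion.normSq J = 1 := by
    rw [Quaternion.normSq_eq_norm_mul_self, hnorm, one_mul]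
  rw [mem_sphere_zero_iff_norm, ← abs_of_nonneg (norm_nonneg _), ← Real.sqrt_sq_eq_abs, sq,
    ← Quaternion.normSq_eq_norm_mul_self, Real.sqrt_eq_one]
  rw [Quaternion.normSq_def'] at hJ2 ⊢
  simp only [Quaternion.re_add, Quaternion.imI_add, Quaternion.imJ_add, Quaternion.imK_add,
    Quaternion.re_smul, Quaternion.imI_smul, Quaternion.imJ_smul, Quaternion.imK_smul,
    Quaternion.re_one, Quaternion.imI_one, Quaternion.imJ_one, Quaternion.imK_one, smul_eq_mul,
    hre]
  rw [hre] at hJ2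
  linear_combination hcr + r ^ 2 * hJ2

lemma re_sq_add_norm_im_sq {q : ℍ} (hq : q ∈ sphere (0 : ℍ) 1) : q.re ^ 2 + ‖q.im‖ ^ 2 = 1 := by
  rw [mem_sphere_zero_iff_norm] at hq
  have h1 := Quaternion.normSq_eq_norm_mul_self q
  have h2 := Quaternion.normSq_eq_norm_mul_self q.im
  rw [hq, Quaternion.normSq_def'] at h1
  rw [Quaternion.normSq_def'] at h2
  simp only [Quaternion.re_im, Quaternion.imI_im, Quaternion.imJ_im, Quaternion.imK_im] at h2
  nlinarith

lemma qexp_mem_sphere (t : ℝ) {I : ℍ} (hI : I ∈ Sph) : qexp t I ∈ sphere (0 : ℍ) 1 :=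
  smul_one_add_smul_mem_sphere (by rw [add_comm]; exact Real.sin_sq_add_cos_sq t) hI

lemma continuous_qexp : Continuous (fun p : ℍ × ℝ => qexp p.2 p.1) := by
  unfold qexp; fun_prop

lemma exists_mul_eq_neg_mul {J : ℍ} (hJ : J.re = 0) : ∃ w : ℍ, w ≠ 0 ∧ w * J = -(J * w) := by
  by_cases h : J.imI = 0 ∧ J.imJ = 0
  · set w : ℍ := ⟨0, 1, 0, 0⟩ with hw
    refine ⟨w, fun h0 => ?_, ?_⟩
    · have h1 := congrArg QuaternionAlgebra.imI h0
      rw [Quaternion.imI_zero] at h1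
      simp [hw] at h1
    · ext <;> simp only [Quaternion.re_mul, Quaternion.imI_mul, Quaternion.imJ_mul,
        Quaternion.imK_mul, Quaternion.re_neg, Quaternion.imI_neg, Quaternion.imJ_neg,
        Quaternion.imK_neg] <;> simp [hw, hJ, h.1, h.2]
  · set w : ℍ := ⟨0, -J.imJ, J.imI, 0⟩ with hw
    refine ⟨w, fun h0 => h ⟨?_, ?_⟩, ?_⟩
    · have h1 := congrArg QuaternionAlgebra.imJ h0
      rw [Quaternion.imJ_zero] at h1
      simpa [hw] using h1
    · have h1 := congrArg QuaternionAlgebra.imI h0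
      rw [Quaternion.imI_zero] at h1
      simpa [hw] using h1
    · ext <;> simp only [Quaternion.re_mul, Quaternion.imI_mul, Quaternion.imJ_mul,
        Quaternion.imK_mul, Quaternion.re_neg, Quaternion.imI_neg, Quaternion.imJ_neg,
        Quaternion.imK_neg] <;> simp [hw, hJ] <;> ring

lemma exists_conj_eq_neg {J : ℍ} (hJ : J ∈ Sph) :
    ∃ w : sphere (0 : ℍ) 1, (w : ℍ) * J * (w : ℍ)⁻¹ = -J := by
  obtain ⟨w, hw, hanti⟩ := exists_mul_eq_neg_mul (mem_Sph_iff.mp hJ).1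
  have hnw : ‖w‖ ≠ 0 := norm_ne_zero_iff.mpr hw
  refine ⟨⟨‖w‖⁻¹ • w, by simp [norm_smul, hnw]⟩, ?_⟩
  simp only
  rw [smul_mul_assoc, hanti, smul_inv₀, smul_mul_smul_comm, inv_inv, inv_mul_cancel₀ hnw,
    one_smul, neg_mul, mul_assoc, mul_inv_cancel₀ hw, mul_one]

lemma IsSlice.sub {f g : ℍ → ℍ} (hf : IsSlice f) (hg : IsSlice g) : IsSlice (f - g) := by
  intro I hI J hJ t
  simp only [Pi.sub_apply, hf I hI J hJ t, hg I hI J hJ t, div_eq_mul_inv]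
  noncomm_ring

lemma IsSlice.exists_eq_add_mul {g : ℍ → ℍ} (hg : IsSlice g) (t : ℝ) :
    ∃ α β : ℍ, ∀ J ∈ Sph, g (qexp t J) = α + J * β := by
  obtain ⟨I, hI⟩ := nonempty_Sph
  refine ⟨(g (qexp t I) + g (qexp (-t) I)) / 2, I / 2 * (g (qexp (-t) I) - g (qexp t I)),
    fun J hJ => ?_⟩
  rw [hg I hI J hJ t]
  simp only [div_eq_mul_inv, mul_assoc]

lemma isSlice_of_qexp_eq {f : ℍ → ℍ} {a b : ℝ → ℍ} (ha : a.Even) (hb : b.Odd)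
    (hf : ∀ t, ∀ J ∈ Sph, f (qexp t J) = a t + J * b t) : IsSlice f := by
  intro I hI J hJ t
  rw [hf t J hJ, hf t I hI, hf (-t) I hI, ha.eq, hb.eq, mul_neg,
    show a t + I * b t + (a t + -(I * b t)) = a t + a t by abel,
    show a t + -(I * b t) - (a t + I * b t) = 2 * -(I * b t) by rw [two_mul]; abel,
    add_self_div_two, div_eq_mul_inv, mul_assoc (J * I), ← mul_assoc _ 2,
    inv_mul_cancel₀ two_ne_zero, one_mul, mul_neg, ← mul_assoc, mul_assoc J,
    mul_self_of_mem_Sph hI]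
  noncomm_ring

instance inst_s6 : IsProbabilityMeasure arcMeasure := by
  constructor
  rw [arcMeasure, Measure.smul_apply, Measure.restrict_apply MeasurableSet.univ, Set.univ_inter,
    Real.volume_Ico, sub_zero, smul_eq_mul]
  exact ENNReal.inv_mul_cancel (ENNReal.ofReal_pos.mpr Real.two_pi_pos).ne' ENNReal.ofReal_ne_top

section

variable {σ : Measure ℍ}

namespace IsSphereMeasure

variable (hσ : IsSphereMeasure σ)
include hσ

lemma ae_mem : ∀ᵐ J ∂σ, J ∈ Sph :=
  mem_ae_iff.mpr hσ.supp

lemma lintegral_eq_lintegral_average (ν : Measure (sphere (0 : ℍ) 1)) [IsProbabilityMeasure ν]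
    {f : ℍ → ℝ≥0∞} (hf : Measurable f) :
    ∫⁻ J, f J ∂σ = ∫⁻ J, ∫⁻ u, f ((u : ℍ)⁻¹ * J * u) ∂ν ∂σ := by
  have := hσ.prob
  have hinv (u : sphere (0 : ℍ) 1) : ∫⁻ J, f ((u : ℍ)⁻¹ * J * u) ∂σ = ∫⁻ J, f J ∂σ := by
    have h := hσ.rotInv (u : ℍ)⁻¹ (by rw [norm_inv, mem_sphere_zero_iff_norm.mp u.2, inv_one])
    rw [inv_inv] at h
    rw [← lintegral_map hf (by fun_prop), h]
  rw [lintegral_lintegral_swap (by fun_prop)]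
  simp_rw [hinv, lintegral_const, measure_univ, mul_one]

lemma isNegInvariant : σ.IsNegInvariant := by
  let ν : Measure (sphere (0 : ℍ) 1) := Measure.haarMeasure ⊤
  have : IsProbabilityMeasure ν := ⟨by
    simpa using Measure.haarMeasure_self
      (K₀ := (⊤ : TopologicalSpace.PositiveCompacts (sphere (0 : ℍ) 1)))⟩
  refine ⟨Measure.ext_of_lintegral _ fun f hf => ?_⟩
  rw [Measure.neg, lintegral_map hf measurable_neg,
    hσ.lintegral_eq_lintegral_average ν (f := fun q => f (-q)) (hf.comp measurable_neg),
    hσ.lintegral_eq_lintegral_average ν hf]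
  refine lintegral_congr_ae (hσ.ae_mem.mono fun J hJ => ?_)
  obtain ⟨w, hw⟩ := exists_conj_eq_neg hJ
  calc ∫⁻ u, f (-((u : ℍ)⁻¹ * J * u)) ∂ν
      = ∫⁻ u, (fun v : sphere (0 : ℍ) 1 => f ((v : ℍ)⁻¹ * J * v)) (w⁻¹ * u) ∂ν := by
        refine lintegral_congr fun u => ?_
        simp only [Metric.unitSphere.coe_mul, Metric.unitSphere.coe_inv, mul_inv_rev, inv_inv]
        rw [show -((u : ℍ)⁻¹ * J * u) = (u : ℍ)⁻¹ * -J * u by noncomm_ring, ← hw]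
        simp only [mul_assoc]
    _ = ∫⁻ u, f ((u : ℍ)⁻¹ * J * u) ∂ν :=
        lintegral_mul_left_eq_self (fun v : sphere (0 : ℍ) 1 => f ((v : ℍ)⁻¹ * J * v)) w⁻¹

end IsSphereMeasure

lemma integral_id_eq_zero_of_isNegInvariant [σ.IsNegInvariant] : ∫ J, J ∂σ = 0 := by
  have h := integral_neg_eq_self (fun J : ℍ => J) σ
  rwa [integral_neg, eq_comm, self_eq_neg] at h

namespace IsSphereMeasure

variable (hσ : IsSphereMeasure σ)
include hσ

lemma integrable_id : Integrable (fun J : ℍ => J) σ := by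
  have := hσ.prob
  exact Integrable.of_bound aestronglyMeasurable_id 1
    (hσ.ae_mem.mono fun J hJ => (mem_Sph_iff.mp hJ).2.le)

lemma integral_inner_sub_affine_eq_zero {X : ℍ → ℍ} (hX : Integrable X σ)
    (hJX : Integrable (fun J => J * X J) σ) (α β : ℍ) :
    ∫ J, ⟪X J - (∫ K, X K ∂σ - J * ∫ K, K * X K ∂σ), α + J * β⟫_ℝ ∂σ = 0 := by
  have := hσ.prob
  have := hσ.isNegInvariant
  set a := ∫ K, X K ∂σ
  set b := ∫ K, K * X K ∂σ
  have hJ := hσ.integrable_id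
  have hA : Integrable (fun J => a - J * b) σ := (integrable_const a).sub (hJ.mul_const b)
  have hB : Integrable (fun J => J * X J - J * a) σ := hJX.sub (hJ.mul_const a)
  have hW : Integrable (fun J => X J - (a - J * b)) σ := hX.sub hA
  have hV : Integrable (fun J => J * X J - J * a - b) σ := hB.sub (integrable_const b)
  have hW0 : ∫ J, X J - (a - J * b) ∂σ = 0 := by
    rw [integral_sub hX hA, integral_sub (integrable_const a) (hJ.mul_const b),
      integral_mul_const_of_integrable hJ, integral_id_eq_zero_of_isNegInvariant]
    simp [a]
  have hV0 : ∫ J, J * X J - J * a - b ∂σ = 0 := by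
    rw [integral_sub hB (integrable_const b), integral_sub hJX (hJ.mul_const a),
      integral_mul_const_of_integrable hJ, integral_id_eq_zero_of_isNegInvariant]
    simp [b]
  have hpt : ∀ᵐ J ∂σ, ⟪X J - (a - J * b), α + J * β⟫_ℝ
      = ⟪α, X J - (a - J * b)⟫_ℝ - ⟪β, J * X J - J * a - b⟫_ℝ := by
    filter_upwards [hσ.ae_mem] with J hJ
    have hJW : star J * (X J - (a - J * b)) = -(J * X J - J * a - b) := by
      rw [star_of_mem_Sph hJ, neg_mul, mul_sub, mul_sub, ← mul_assoc, mul_self_of_mem_Sph hJ]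
      noncomm_ring
    rw [inner_add_right, Quaternion.inner_mul_right_eq, hJW, inner_neg_left, real_inner_comm α,
      real_inner_comm β]
    ring
  rw [integral_congr_ae hpt, integral_sub (hW.const_inner α) (hV.const_inner β),
    integral_inner hW, integral_inner hV, hW0, hV0, inner_zero_right, inner_zero_right, sub_zero]

end IsSphereMeasure

def sphereMean (σ : Measure ℍ) (φ : ℍ → ℍ) (c r : ℝ) : ℍ := ∫ J, φ (c • 1 + r • J) ∂σ

def sphereMoment (σ : Measure ℍ) (φ : ℍ → ℍ) (c r : ℝ) : ℍ := ∫ J, J * φ (c • 1 + r • J) ∂σ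

/-- Here `q = q.re + ‖q.im‖ • I` with `I = ‖q.im‖⁻¹ • q.im`, and `I = 0` for real `q`
(as `0⁻¹ = 0`). -/
def sliceAverage (σ : Measure ℍ) (φ : ℍ → ℍ) (q : ℍ) : ℍ :=
  sphereMean σ φ q.re ‖q.im‖ - (‖q.im‖⁻¹ • q.im) * sphereMoment σ φ q.re ‖q.im‖

section NegInvariant

variable [σ.IsNegInvariant] (φ : ℍ → ℍ)

lemma sphereMean_even (c : ℝ) : (sphereMean σ φ c).Even := fun r => by
  simp only [sphereMean, neg_smul, ← smul_neg]
  exact integral_neg_eq_self (fun J => φ (c • 1 + r • J)) σ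

lemma sphereMoment_odd (c : ℝ) : (sphereMoment σ φ c).Odd := fun r => by
  simp only [sphereMoment, neg_smul, ← smul_neg]
  rw [← integral_neg_eq_self (fun J => J * φ (c • 1 + r • J)) σ, ← integral_neg]
  simp only [neg_mul, neg_neg]

lemma sliceAverage_qexp (t : ℝ) {I : ℍ} (hI : I ∈ Sph) :
    sliceAverage σ φ (qexp t I) =
      sphereMean σ φ (cos t) (sin t) - I * sphereMoment σ φ (cos t) (sin t) := by
  obtain ⟨hre, hnorm⟩ := mem_Sph_iff.mp hI
  have h_re : (qexp t I).re = cos t := by simp [qexp, hre, Quaternion.re_one]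
  have h_im : (qexp t I).im = sin t • I := by
    ext <;> simp [qexp, hre, Quaternion.imI_one, Quaternion.imJ_one, Quaternion.imK_one]
  have h_norm : ‖(qexp t I).im‖ = |sin t| := by
    rw [h_im, norm_smul, hnorm, mul_one, Real.norm_eq_abs]
  rw [sliceAverage, h_re, h_norm, h_im, (sphereMean_even φ _).comp_abs, smul_smul,
    smul_mul_assoc, ← mul_smul_comm, (sphereMoment_odd φ _).inv_abs_mul_smul_comp_abs]

lemma isSlice_sliceAverage : IsSlice (sliceAverage σ φ) := by
  refine isSlice_of_qexp_eq (a := fun t => sphereMean σ φ (cos t) (sin t))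
    (b := fun t => -sphereMoment σ φ (cos t) (sin t)) (fun t => ?_) (fun t => ?_)
    fun t J hJ => ?_
  · simp only [cos_neg, sin_neg, (sphereMean_even φ _).eq]
  · simp only [cos_neg, sin_neg, (sphereMoment_odd φ _).eq]
  · rw [sliceAverage_qexp φ t hJ, mul_neg, sub_eq_add_neg]

end NegInvariant

namespace IsSphereMeasure

variable (hσ : IsSphereMeasure σ)
include hσ

lemma isProbabilityMeasure_bMeasure : IsProbabilityMeasure (bMeasure σ) := by
  have := hσ.prob
  exact Measure.isProbabilityMeasure_map continuous_qexp.aemeasurable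

lemma ae_prod_mem : ∀ᵐ p ∂σ.prod arcMeasure, p.1 ∈ Sph :=
  Measure.quasiMeasurePreserving_fst.ae hσ.ae_mem

lemma ae_bMeasure_mem_sphere : ∀ᵐ q ∂bMeasure σ, q ∈ sphere (0 : ℍ) 1 :=
  (ae_map_iff continuous_qexp.aemeasurable Metric.isClosed_sphere.measurableSet).mpr <|
    hσ.ae_prod_mem.mono fun p hp => qexp_mem_sphere p.2 hp

lemma integrable_of_continuousOn {ψ : ℍ → ℍ} (hψ : ContinuousOn ψ Sph) : Integrable ψ σ := by
  have := hσ.prob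
  have h := hψ.integrableOn_compact isCompact_Sph (μ := σ)
  rwa [IntegrableOn, Measure.restrict_eq_self_of_ae_mem hσ.ae_mem] at h

lemma aestronglyMeasurable_integral_of_continuousOn {μ : Measure ℍ} [SFinite μ] {s : Set ℍ}
    (hs : MeasurableSet s) (hμ : ∀ᵐ q ∂μ, q ∈ s) {ψ : ℍ × ℍ → ℍ}
    (hψ : ContinuousOn ψ (s ×ˢ Sph)) : AEStronglyMeasurable (fun q => ∫ J, ψ (q, J) ∂σ) μ := by
  have := hσ.prob
  refine AEStronglyMeasurable.integral_prod_right' ?_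
  have h := hψ.aestronglyMeasurable (μ := μ.prod σ) (hs.prod isCompact_Sph.isClosed.measurableSet)
  rwa [← Measure.prod_restrict, Measure.restrict_eq_self_of_ae_mem hμ,
    Measure.restrict_eq_self_of_ae_mem hσ.ae_mem] at h

variable {φ : ℍ → ℍ} (hφ : ContinuousOn φ (sphere (0 : ℍ) 1))
include hφ

lemma integrable_comp_qexp (t : ℝ) : Integrable (fun J => φ (qexp t J)) σ :=
  hσ.integrable_of_continuousOn <|
    hφ.comp (by unfold qexp; fun_prop) fun J hJ => qexp_mem_sphere t hJ

lemma integrable_mul_comp_qexp (t : ℝ) : Integrable (fun J => J * φ (qexp t J)) σ :=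
  hσ.integrable_of_continuousOn <| continuousOn_id.mul <|
    hφ.comp (by unfold qexp; fun_prop) fun J hJ => qexp_mem_sphere t hJ

lemma sliceAverage_qexp_eq_integral (t : ℝ) {I : ℍ} (hI : I ∈ Sph) :
    sliceAverage σ φ (qexp t I) = ∫ J, (1 - I * J) * φ (qexp t J) ∂σ := by
  have := hσ.isNegInvariant
  simp_rw [sub_mul, one_mul, mul_assoc]
  rw [sliceAverage_qexp φ t hI, integral_sub (hσ.integrable_comp_qexp hφ t)
    ((hσ.integrable_mul_comp_qexp hφ t).const_mul I),
    integral_const_mul_of_integrable (hσ.integrable_mul_comp_qexp hφ t)]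
  rfl

lemma memLp_sliceAverage (p : ℝ≥0∞) : MemLp (sliceAverage σ φ) p (bMeasure σ) := by
  have := hσ.prob
  have := hσ.isProbabilityMeasure_bMeasure
  obtain ⟨M, hM⟩ := (isCompact_sphere (0 : ℍ) 1).exists_bound_of_continuousOn hφ
  have hmem {q : ℍ} (hq : q ∈ sphere (0 : ℍ) 1) {J : ℍ} (hJ : J ∈ Sph) :
      q.re • (1 : ℍ) + ‖q.im‖ • J ∈ sphere (0 : ℍ) 1 :=
    smul_one_add_smul_mem_sphere (re_sq_add_norm_im_sq hq) hJ
  have hψ : ContinuousOn (fun x : ℍ × ℍ => φ (x.1.re • 1 + ‖x.1.im‖ • x.2))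
      (sphere (0 : ℍ) 1 ×ˢ Sph) :=
    hφ.comp (Continuous.continuousOn <|
      ((Quaternion.continuous_re.comp continuous_fst).smul continuous_const).add
        ((Quaternion.continuous_im.comp continuous_fst).norm.smul continuous_snd))
      fun x hx => hmem hx.1 hx.2
  have hmeas {ψ : ℍ × ℍ → ℍ} (hψ : ContinuousOn ψ (sphere (0 : ℍ) 1 ×ˢ Sph)) :=
    hσ.aestronglyMeasurable_integral_of_continuousOn Metric.isClosed_sphere.measurableSet
      hσ.ae_bMeasure_mem_sphere hψ
  have hdir : Measurable fun q : ℍ => ‖q.im‖⁻¹ • q.im :=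
    Quaternion.continuous_im.measurable.norm.inv.smul Quaternion.continuous_im.measurable
  refine MemLp.of_bound ((hmeas hψ).sub (hdir.aestronglyMeasurable.mul
    (hmeas (continuousOn_snd.mul hψ)))) (M + M) ?_
  filter_upwards [hσ.ae_bMeasure_mem_sphere] with q hq
  have hmean : ‖sphereMean σ φ q.re ‖q.im‖‖ ≤ M :=
    (norm_integral_le_of_norm_le_const (μ := σ) (C := M)
      (hσ.ae_mem.mono fun J hJ => hM _ (hmem hq hJ))).trans_eq (by simp)
  have hmoment : ‖sphereMoment σ φ q.re ‖q.im‖‖ ≤ M := by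
    refine (norm_integral_le_of_norm_le_const (μ := σ) (C := M)
      (hσ.ae_mem.mono fun J hJ => ?_)).trans_eq (by simp)
    rw [norm_mul, (mem_Sph_iff.mp hJ).2, one_mul]
    exact hM _ (hmem hq hJ)
  have hdir_le : ‖‖q.im‖⁻¹ • q.im‖ ≤ 1 := by
    rw [norm_smul, norm_inv, norm_norm]
    exact inv_mul_le_one
  calc ‖sliceAverage σ φ q‖
      ≤ ‖sphereMean σ φ q.re ‖q.im‖‖ + ‖‖q.im‖⁻¹ • q.im‖ * ‖sphereMoment σ φ q.re ‖q.im‖‖ :=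
        (norm_sub_le _ _).trans (add_le_add le_rfl (norm_mul_le _ _))
    _ ≤ M + 1 * M := by gcongr
    _ = M + M := by rw [one_mul]

lemma integral_inner_sub_sliceAverage_eq_zero (hφ2 : MemLp φ 2 (bMeasure σ)) {g : ℍ → ℍ}
    (hg : IsSlice g) (hg2 : MemLp g 2 (bMeasure σ)) :
    ∫ q, ⟪φ q - sliceAverage σ φ q, g q⟫_ℝ ∂bMeasure σ = 0 := by
  have := hσ.prob
  have := hσ.isNegInvariant
  have hint : Integrable (fun q => ⟪φ q - sliceAverage σ φ q, g q⟫_ℝ) (bMeasure σ) :=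
    (hφ2.sub (hσ.memLp_sliceAverage hφ 2)).integrable_inner hg2
  have hint' : Integrable (fun p : ℍ × ℝ => ⟪φ (qexp p.2 p.1) - sliceAverage σ φ (qexp p.2 p.1),
      g (qexp p.2 p.1)⟫_ℝ) (σ.prod arcMeasure) :=
    (integrable_map_measure hint.1 continuous_qexp.aemeasurable).mp hint
  rw [bMeasure, integral_map continuous_qexp.aemeasurable hint.1, integral_prod_symm _ hint']
  refine integral_eq_zero_of_ae (Filter.Eventually.of_forall fun t => ?_)
  obtain ⟨α, β, hαβ⟩ := hg.exists_eq_add_mul t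
  rw [Pi.zero_apply, ← hσ.integral_inner_sub_affine_eq_zero (hσ.integrable_comp_qexp hφ t)
    (hσ.integrable_mul_comp_qexp hφ t) α β]
  refine integral_congr_ae (hσ.ae_mem.mono fun J hJ => ?_)
  dsimp only
  rw [hαβ J hJ, sliceAverage_qexp φ t hJ]
  rfl

end IsSphereMeasure

end

/-- If `φ : ∂B → ℍ` is continuous, then for `Σ`-almost every point
`exp(tI)` of `∂B` (expressed through the parametrization `(I, t) ↦ exp(tI)` of
`(∂B, Σ)` by `σ ⊗ dt/2π`) one has `Πφ(exp(tI)) = ∫_S (1 − IJ) φ(exp(tJ)) dσ(J)`. -/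
theorem projection_of_continuous (σ : Measure (Quaternion ℝ)) (hσ : IsSphereMeasure σ)
    (φ Pφ : Quaternion ℝ → Quaternion ℝ)
    (hcont : ContinuousOn φ (Metric.sphere (0 : Quaternion ℝ) 1))
    (hP : IsProjection σ φ Pφ) :
    ∀ᵐ p : Quaternion ℝ × ℝ ∂(σ.prod arcMeasure),
      Pφ (qexp p.2 p.1) = ∫ J, (1 - p.1 * J) * φ (qexp p.2 J) ∂σ := by
  have := hσ.isNegInvariant
  obtain ⟨hφ2, hPslice, hP2, hPorth⟩ := hP
  have hG2 := hσ.memLp_sliceAverage hcont 2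
  have hD : IsSlice (sliceAverage σ φ - Pφ) := (isSlice_sliceAverage φ).sub hPslice
  have hD2 : MemLp (sliceAverage σ φ - Pφ) 2 (bMeasure σ) := hG2.sub hP2
  have horth_P := hPorth _ hD hD2
  have horth_G := hσ.integral_inner_sub_sliceAverage_eq_zero hcont hφ2 hD hD2
  have hself := integral_sub ((hφ2.sub hP2).integrable_inner hD2)
    ((hφ2.sub hG2).integrable_inner hD2)
  simp only [Quaternion.re_star_mul_eq_inner, Pi.sub_apply] at horth_P horth_G hself
  simp only [← inner_sub_left, sub_sub_sub_cancel_left, horth_P, horth_G, sub_zero] at hself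
  have hPG : ∀ᵐ q ∂bMeasure σ, Pφ q = sliceAverage σ φ q :=
    (hD2.ae_eq_zero_of_integral_inner_self hself).mono fun q hq => (sub_eq_zero.mp hq).symm
  filter_upwards [ae_of_ae_map continuous_qexp.aemeasurable hPG, hσ.ae_prod_mem] with p hp hpS
  rw [hp, hσ.sliceAverage_qexp_eq_integral hcont p.2 hpS]
end
end
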